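/- Let C ⊆ ℚ^n be a full-dimensional polyhedral cone, π : ℚ^n → ℚ^d the projection onto the last d coordinates. For v ∈ π(C) and w ∈ π^∨(C^∨), we have N_C(tilde-face_w(C_v)) = tilde-face_v(C^∨_w), where tilde-face_w(C_v) is the smallest face of C containing the preimage of face_w(C_v), and tilde-face_v(C^∨_w) is the smallest face of C^∨ containing the preimage of face_v(C^∨_w). -/

import Mathlib

open Finset Set Pointwise

noncomputable section

variable {ι : Type*}

/-- The standard pairing between `ι → ℚ` and itself (functionals as vectors). -/
def dotp [Fintype ι] (w x : ι → ℚ) : ℚ := ∑ i, w i * x i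

/-- The face of `P` on which the linear functional `w` attains its minimum. -/
def faceOf [Fintype ι] (P : Set (ι → ℚ)) (w : ι → ℚ) : Set (ι → ℚ) :=
  {x | x ∈ P ∧ ∀ y ∈ P, dotp w x ≤ dotp w y}

/-- `F` is a (nonempty) face of `P`. -/
def IsFaceOf [Fintype ι] (P F : Set (ι → ℚ)) : Prop :=
  F.Nonempty ∧ ∃ w, F = faceOf P w

/-- The (closed) inner normal cone of a face `F` of `P`: all functionals minimized on `F`. -/
def normalCone [Fintype ι] (P F : Set (ι → ℚ)) : Set (ι → ℚ) :=
  {w | F ⊆ faceOf P w}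

/-- The recession cone of `P`. -/
def recCone (P : Set (ι → ℚ)) : Set (ι → ℚ) := {u | ∀ x ∈ P, x + u ∈ P}

/-- The dual cone of `C`. -/
def dualCone [Fintype ι] (C : Set (ι → ℚ)) : Set (ι → ℚ) := {w | ∀ x ∈ C, 0 ≤ dotp w x}

/-- The relative interior of a convex set `S`. -/
def relint (S : Set (ι → ℚ)) : Set (ι → ℚ) :=
  {x | x ∈ S ∧ ∀ y ∈ S, ∃ ε : ℚ, 0 < ε ∧ x + ε • (x - y) ∈ S}

/-- `P` is a polyhedron `{x | A x ≥ b}`. -/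
def IsPolyhedron [Fintype ι] (P : Set (ι → ℚ)) : Prop :=
  ∃ (r : ℕ) (A : Fin r → ι → ℚ) (b : Fin r → ℚ), P = {x | ∀ i, b i ≤ dotp (A i) x}

/-- `C` is a polyhedral cone `{x | A x ≥ 0}`. -/
def IsPolyhedralCone [Fintype ι] (C : Set (ι → ℚ)) : Prop :=
  ∃ (r : ℕ) (A : Fin r → ι → ℚ), C = {x | ∀ i, 0 ≤ dotp (A i) x}

/-- Two polyhedra are normally equivalent: they have the same inner normal fan,
i.e. the same support and the same partition of functionals by faces. -/
def normallyEquiv [Fintype ι] (P P' : Set (ι → ℚ)) : Prop :=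
  (∀ w, (faceOf P w).Nonempty ↔ (faceOf P' w).Nonempty) ∧
  ∀ w w', faceOf P w = faceOf P w' ↔ faceOf P' w = faceOf P' w'

/-- `F` is the smallest face of `P` containing the set `S`. -/
def IsSmallestFaceContaining [Fintype ι] (P S F : Set (ι → ℚ)) : Prop :=
  IsFaceOf P F ∧ S ⊆ F ∧ ∀ G, IsFaceOf P G → S ⊆ G → F ⊆ G

/-- The homogenization `P̃` of `P`: the closure in `(ι ⊕ Unit) → ℚ` of the cone over `P`
placed at height `1`. -/
def tildeSet (P : Set (ι → ℚ)) : Set ((ι ⊕ Unit) → ℚ) :=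
  closure {p | ∃ x ∈ P, ∃ l : ℚ, 0 < l ∧ p = Sum.elim (l • x) (fun _ => l)}

section Engine

variable {α β : Type} [Fintype α] [Fintype β]

lemma dotp_comm' (w x : α → ℚ) : dotp w x = dotp x w :=
  Finset.sum_congr rfl fun i _ => mul_comm _ _

lemma dotp_add_right' (w x y : α → ℚ) : dotp w (x + y) = dotp w x + dotp w y := by
  simp [dotp, mul_add, Finset.sum_add_distrib]

lemma dotp_smul_right' (c : ℚ) (w x : α → ℚ) : dotp w (c • x) = c * dotp w x := by
  simp only [dotp, Finset.mul_sum, Pi.smul_apply, smul_eq_mul]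
  exact Finset.sum_congr rfl fun i _ => by ring

lemma dotp_sub_right' (w x y : α → ℚ) : dotp w (x - y) = dotp w x - dotp w y := by
  simp [dotp, mul_sub, Finset.sum_sub_distrib]

lemma dotp_zero_right' (w : α → ℚ) : dotp w 0 = 0 := by simp [dotp]

lemma dotp_zero_left' (x : α → ℚ) : dotp 0 x = 0 := by simp [dotp]

lemma dotp_sum_right' (w : α → ℚ) (s : Finset β) (f : β → α → ℚ) :
    dotp w (∑ j ∈ s, f j) = ∑ j ∈ s, dotp w (f j) := by
  simp only [dotp, Finset.sum_apply, Finset.mul_sum]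
  exact Finset.sum_comm

lemma sum_mul_dotp (l : β → ℚ) (B : β → α → ℚ) (x : α → ℚ) :
    ∑ j, l j * dotp (B j) x = dotp (fun i => ∑ j, l j * B j i) x := by
  unfold dotp
  calc ∑ j, l j * ∑ i, B j i * x i = ∑ j, ∑ i, l j * B j i * x i := by
        simp [Finset.mul_sum, mul_assoc]
    _ = ∑ i, ∑ j, l j * B j i * x i := Finset.sum_comm
    _ = ∑ i, (∑ j, l j * B j i) * x i := by simp [Finset.sum_mul]

lemma dotp_comb_left (a e : ℚ) (u g x : α → ℚ) :
    dotp (fun i => a * u i + e * g i) x = a * dotp u x + e * dotp g x := by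
  simp [dotp, add_mul, Finset.sum_add_distrib, Finset.mul_sum, mul_assoc]

lemma dotp_split (u x : (α ⊕ β) → ℚ) :
    dotp u x = dotp (u ∘ Sum.inl) (x ∘ Sum.inl) + dotp (u ∘ Sum.inr) (x ∘ Sum.inr) :=
  Fintype.sum_sum_type _

/-- A nonempty polyhedron has a "relative interior" point. -/
lemma relint_exists (B : β → α → ℚ) (c : β → ℚ) (x₀ : α → ℚ)
    (hx₀ : ∀ j, c j ≤ dotp (B j) x₀) :
    ∃ z : α → ℚ, (∀ j, c j ≤ dotp (B j) z) ∧
      ∀ x : α → ℚ, (∀ j, c j ≤ dotp (B j) x) →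
        ∃ ε : ℚ, 0 < ε ∧ ∀ j, c j ≤ dotp (B j) (z + ε • (z - x)) := by
  classical
  set feas : (α → ℚ) → Prop := fun x => ∀ j, c j ≤ dotp (B j) x with hfeas
  set T : Finset β := Finset.univ.filter (fun j => ∃ x, feas x ∧ c j < dotp (B j) x) with hT
  have hTeq : ∀ j, j ∉ T → ∀ x, feas x → dotp (B j) x = c j := by
    intro j hj x hx
    have : ¬ (∃ x, feas x ∧ c j < dotp (B j) x) := by
      intro h; exact hj (Finset.mem_filter.mpr ⟨Finset.mem_univ _, h⟩)
    push_neg at this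
    exact le_antisymm (this x hx) (hx j)
  -- witness function
  set g : β → (α → ℚ) := fun j =>
    if h : ∃ x, feas x ∧ c j < dotp (B j) x then h.choose else x₀ with hg
  have hgfeas : ∀ j, feas (g j) := by
    intro j; by_cases h : ∃ x, feas x ∧ c j < dotp (B j) x
    · simpa [hg, h] using h.choose_spec.1
    · simpa [hg, h] using hx₀
  have hgstrict : ∀ j ∈ T, c j < dotp (B j) (g j) := by
    intro j hj
    have h := (Finset.mem_filter.mp hj).2
    simpa [hg, h] using h.choose_spec.2
  by_cases hTne : T.Nonempty
  case neg =>
    refine ⟨x₀, hx₀, fun x hx => ⟨1, one_pos, fun j => ?_⟩⟩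
    have hj : j ∉ T := fun h => hTne ⟨j, h⟩
    rw [dotp_add_right', dotp_smul_right', dotp_sub_right', hTeq j hj x₀ hx₀, hTeq j hj x hx]
    simp
  case pos =>
    obtain ⟨z, hzfeas, hzstrict⟩ :
        ∃ z, feas z ∧ ∀ k ∈ T, c k < dotp (B k) z := by
      set N : ℚ := (T.card : ℚ) with hN
      have hNpos : 0 < N := by
        have h := Finset.card_pos.mpr hTne
        rw [hN]; exact_mod_cast h
      refine ⟨N⁻¹ • ∑ j ∈ T, g j, ?_, ?_⟩
      · intro k
        rw [dotp_smul_right', dotp_sum_right']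
        have : N * c k ≤ ∑ j ∈ T, dotp (B k) (g j) := by
          calc N * c k = ∑ _j ∈ T, c k := by rw [Finset.sum_const, nsmul_eq_mul, hN]
            _ ≤ ∑ j ∈ T, dotp (B k) (g j) := Finset.sum_le_sum fun j _ => hgfeas j k
        calc c k = N⁻¹ * (N * c k) := by field_simp
          _ ≤ N⁻¹ * ∑ j ∈ T, dotp (B k) (g j) := by
              apply mul_le_mul_of_nonneg_left this (by positivity)
      · intro k hk
        rw [dotp_smul_right', dotp_sum_right']
        have : N * c k < ∑ j ∈ T, dotp (B k) (g j) := by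
          calc N * c k = ∑ _j ∈ T, c k := by rw [Finset.sum_const, nsmul_eq_mul, hN]
            _ < ∑ j ∈ T, dotp (B k) (g j) :=
                Finset.sum_lt_sum (fun j _ => hgfeas j k) ⟨k, hk, hgstrict k hk⟩
        calc c k = N⁻¹ * (N * c k) := by field_simp
          _ < N⁻¹ * ∑ j ∈ T, dotp (B k) (g j) := by
              apply mul_lt_mul_of_pos_left this (by positivity)
    refine ⟨z, hzfeas, fun x hx => ?_⟩
    set q : β → ℚ := fun j =>
      if dotp (B j) (z - x) < 0 then (dotp (B j) z - c j) / (-(dotp (B j) (z - x))) else 1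
      with hq
    have hqpos : ∀ j ∈ T, 0 < q j := by
      intro j hj
      rw [hq]; dsimp only
      split
      next h => exact div_pos (by linarith [hzstrict j hj]) (by linarith)
      next h => exact one_pos
    refine ⟨T.inf' hTne q, ?_, ?_⟩
    · exact (Finset.lt_inf'_iff hTne).mpr hqpos
    · intro j
      set ε := T.inf' hTne q with hε
      have hεpos : 0 < ε := (Finset.lt_inf'_iff hTne).mpr hqpos
      rw [dotp_add_right', dotp_smul_right', dotp_sub_right']
      by_cases hj : j ∈ T
      · by_cases hneg : dotp (B j) z - dotp (B j) x < 0
        · have hεle : ε ≤ q j := Finset.inf'_le q hj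
          have hqj : q j = (dotp (B j) z - c j) / (-(dotp (B j) z - dotp (B j) x)) := by
            rw [hq]; dsimp only; rw [dotp_sub_right', if_pos hneg]
          have hne : -(dotp (B j) z - dotp (B j) x) ≠ 0 := by linarith
          have h1 : q j * (-(dotp (B j) z - dotp (B j) x)) = dotp (B j) z - c j := by
            rw [hqj, div_mul_cancel₀ _ hne]
          nlinarith [hzstrict j hj]
        · nlinarith [hzstrict j hj]
      · have h1 := hTeq j hj x hx
        have h2 := hTeq j hj z hzfeas
        rw [h1, h2]
        simp
end Engine

section Engine2

/-- Fourier–Motzkin: an infeasible system has a positive combination certificate. -/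
lemma ff_fin : ∀ (k : ℕ) (κ : Type) [Fintype κ] (B : κ → Fin k → ℚ) (c : κ → ℚ),
    (¬ ∃ x : Fin k → ℚ, ∀ j, c j ≤ dotp (B j) x) →
    ∃ l : κ → ℚ, (∀ j, 0 ≤ l j) ∧ (∀ i, ∑ j, l j * B j i = 0) ∧ 0 < ∑ j, l j * c j := by
  intro k
  induction k with
  | zero =>
    intro κ _ B c hinf
    classical
    have h0 : ¬ ∀ j, c j ≤ 0 := fun h => hinf ⟨0, fun j => by simpa [dotp] using h j⟩
    push_neg at h0
    obtain ⟨j₀, hj₀⟩ := h0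
    refine ⟨fun j => if j = j₀ then 1 else 0, ?_, ?_, ?_⟩
    · intro j; by_cases h : j = j₀ <;> simp [h]
    · intro i; exact i.elim0
    · simp only [ite_mul, one_mul, zero_mul, Finset.sum_ite_eq', Finset.mem_univ, if_true]
      linarith
  | succ k IH =>
    intro κ _ B c hinf
    classical
    set b : κ → ℚ := fun j => B j (Fin.last k) with hb
    set D : κ → Fin k → ℚ := fun j i => B j i.castSucc with hD
    have hsnoc : ∀ (j : κ) (x : Fin k → ℚ) (t : ℚ),
        dotp (B j) (Fin.snoc x t) = dotp (D j) x + b j * t := by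
      intro j x t
      unfold dotp
      rw [Fin.sum_univ_castSucc]
      simp [hD, hb]
    have hBD : ∀ (j : κ) (i : Fin k), B j i.castSucc = D j i := fun j i => rfl
    set B' : ({p : κ × κ // 0 < b p.1 ∧ b p.2 < 0} ⊕ {j : κ // b j = 0}) → Fin k → ℚ :=
      Sum.elim (fun p i => (-(b p.1.2)) * D p.1.1 i + b p.1.1 * D p.1.2 i)
        (fun z i => D z.1 i) with hB'
    set c' : ({p : κ × κ // 0 < b p.1 ∧ b p.2 < 0} ⊕ {j : κ // b j = 0}) → ℚ :=
      Sum.elim (fun p => (-(b p.1.2)) * c p.1.1 + b p.1.1 * c p.1.2)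
        (fun z => c z.1) with hc'
    have hinf' : ¬ ∃ x' : Fin k → ℚ, ∀ p, c' p ≤ dotp (B' p) x' := by
      rintro ⟨x', hx'⟩
      apply hinf
      have hpair : ∀ (j₁ j₂ : κ) (h1 : 0 < b j₁) (h2 : b j₂ < 0),
          (-(b j₂)) * c j₁ + b j₁ * c j₂ ≤
            (-(b j₂)) * dotp (D j₁) x' + b j₁ * dotp (D j₂) x' := by
        intro j₁ j₂ h1 h2
        have h := hx' (Sum.inl ⟨(j₁, j₂), h1, h2⟩)
        simp only [hB', hc', Sum.elim_inl] at h
        rwa [dotp_comb_left] at h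
      have hzero : ∀ (j : κ), b j = 0 → c j ≤ dotp (D j) x' := by
        intro j hj
        simpa [hB', hc'] using hx' (Sum.inr ⟨j, hj⟩)
      suffices h : ∃ t : ℚ, ∀ j, c j ≤ dotp (D j) x' + b j * t by
        obtain ⟨t, ht⟩ := h
        exact ⟨Fin.snoc x' t, fun j => by rw [hsnoc]; exact ht j⟩
      set val : κ → ℚ := fun j => (c j - dotp (D j) x') / b j with hval
      set Lset : Finset κ := Finset.univ.filter (fun j => 0 < b j) with hLset
      set Uset : Finset κ := Finset.univ.filter (fun j => b j < 0) with hUset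
      by_cases hL : Lset.Nonempty
      · refine ⟨Lset.sup' hL val, fun j => ?_⟩
        rcases lt_trichotomy (b j) 0 with hbj | hbj | hbj
        · obtain ⟨js, hjs, hsup⟩ := Finset.exists_mem_eq_sup' hL val
          have hjspos : 0 < b js := (Finset.mem_filter.mp hjs).2
          have hp := hpair js j hjspos hbj
          have hcancel : b js * val js = c js - dotp (D js) x' := by
            rw [hval]; field_simp
          rw [hsup]
          nlinarith [hcancel, hp]
        · rw [hbj]; simpa using hzero j hbj
        · have hjL : j ∈ Lset := by simp [hLset, hbj]
          have := Finset.le_sup' val hjL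
          rw [hval] at this
          have := (div_le_iff₀ hbj).mp this
          linarith
      · by_cases hU : Uset.Nonempty
        · refine ⟨Uset.inf' hU val, fun j => ?_⟩
          rcases lt_trichotomy (b j) 0 with hbj | hbj | hbj
          · have hjU : j ∈ Uset := by simp [hUset, hbj]
            have hle := Finset.inf'_le val hjU
            rw [hval] at hle
            have := (le_div_iff_of_neg hbj).mp hle
            linarith
          · rw [hbj]; simpa using hzero j hbj
          · exact absurd (show j ∈ Lset by simp [hLset, hbj]) (fun h => hL ⟨j, h⟩)
        · refine ⟨0, fun j => ?_⟩
          rcases lt_trichotomy (b j) 0 with hbj | hbj | hbj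
          · exact absurd (show j ∈ Uset by simp [hUset, hbj]) (fun h => hU ⟨j, h⟩)
          · rw [hbj]; simpa using hzero j hbj
          · exact absurd (show j ∈ Lset by simp [hLset, hbj]) (fun h => hL ⟨j, h⟩)
    obtain ⟨l', hl'0, hl'B, hl'c⟩ := IH _ B' c' hinf'
    set coeff : ({p : κ × κ // 0 < b p.1 ∧ b p.2 < 0} ⊕ {j : κ // b j = 0}) → κ → ℚ :=
      Sum.elim
        (fun p j => (if j = p.1.1 then -(b p.1.2) else 0) + (if j = p.1.2 then b p.1.1 else 0))
        (fun z j => if j = z.1 then 1 else 0) with hcoeff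
    have hswap : ∀ f : κ → ℚ, ∑ j, (∑ p, l' p * coeff p j) * f j =
        ∑ p, l' p * (Sum.elim (fun p => (-(b p.1.2)) * f p.1.1 + b p.1.1 * f p.1.2)
          (fun z => f z.1) p) := by
      intro f
      have h1 : ∀ p, (∑ j, coeff p j * f j) =
          Sum.elim (fun p => (-(b p.1.2)) * f p.1.1 + b p.1.1 * f p.1.2)
            (fun z => f z.1) p := by
        rintro (p | z)
        · simp [hcoeff, add_mul, ite_mul, Finset.sum_add_distrib, Finset.sum_ite_eq']
        · simp [hcoeff, ite_mul, Finset.sum_ite_eq']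
      calc ∑ j, (∑ p, l' p * coeff p j) * f j
          = ∑ j, ∑ p, l' p * (coeff p j * f j) := by
            refine Finset.sum_congr rfl fun j _ => ?_
            rw [Finset.sum_mul]
            exact Finset.sum_congr rfl fun p _ => by ring
        _ = ∑ p, ∑ j, l' p * (coeff p j * f j) := Finset.sum_comm
        _ = ∑ p, l' p * ∑ j, coeff p j * f j := by
            refine Finset.sum_congr rfl fun p _ => ?_
            rw [Finset.mul_sum]
        _ = _ := Finset.sum_congr rfl fun p _ => by rw [h1]
    refine ⟨fun j => ∑ p, l' p * coeff p j, ?_, ?_, ?_⟩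
    · intro j
      apply Finset.sum_nonneg
      rintro (p | z) _
      · have h1 := p.2.1
        have h2 := p.2.2
        apply mul_nonneg (hl'0 _)
        simp only [hcoeff, Sum.elim_inl]
        apply add_nonneg <;> split <;> linarith
      · apply mul_nonneg (hl'0 _)
        simp only [hcoeff, Sum.elim_inr]
        split <;> norm_num
    · intro i
      refine Fin.lastCases ?_ ?_ i
      · rw [hswap b]
        apply Finset.sum_eq_zero
        rintro (p | z) _
        · simp only [Sum.elim_inl]
          have h : (-(b p.1.2)) * b p.1.1 + b p.1.1 * b p.1.2 = 0 := by ring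
          rw [h, mul_zero]
        · simp only [Sum.elim_inr]
          rw [z.2, mul_zero]
      · intro i'
        rw [hswap (fun j => B j i'.castSucc)]
        refine Eq.trans (Finset.sum_congr rfl fun p _ => ?_) (hl'B i')
        rcases p with p | z <;> simp [hB', hD]
    · rw [hswap c]
      refine lt_of_lt_of_eq hl'c (Finset.sum_congr rfl fun p _ => ?_)
      rcases p with p | z <;> simp [hc']
end Engine2

section Engine3

variable {α β : Type} [Fintype α] [Fintype β]

lemma dotp_elim (u : α → ℚ) (g : β → ℚ) (z : (α ⊕ β) → ℚ) :
    dotp (Sum.elim u g) z = dotp u (z ∘ Sum.inl) + dotp g (z ∘ Sum.inr) := by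
  rw [dotp_split]; rfl

lemma dotp_bool (g h : Bool → ℚ) : dotp g h = g true * h true + g false * h false :=
  Fintype.sum_bool _

/-- Farkas infeasibility certificate, arbitrary finite column type. -/
lemma ff (B : β → α → ℚ) (c : β → ℚ)
    (h : ¬ ∃ x : α → ℚ, ∀ j, c j ≤ dotp (B j) x) :
    ∃ l : β → ℚ, (∀ j, 0 ≤ l j) ∧ (∀ i, ∑ j, l j * B j i = 0) ∧ 0 < ∑ j, l j * c j := by
  classical
  set e := Fintype.equivFin α with he
  have key : ∀ (j : β) (x : Fin (Fintype.card α) → ℚ),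
      dotp (fun i => B j (e.symm i)) x = dotp (B j) (fun i0 => x (e i0)) :=
    fun j x => (Fintype.sum_equiv e (fun i0 => B j i0 * x (e i0))
      (fun i => B j (e.symm i) * x i) (fun i0 => by simp)).symm
  have h' : ¬ ∃ x : Fin (Fintype.card α) → ℚ, ∀ j, c j ≤ dotp (fun i => B j (e.symm i)) x := by
    rintro ⟨x, hx⟩
    exact h ⟨fun i0 => x (e i0), fun j => by rw [← key]; exact hx j⟩
  obtain ⟨l, h0, hB, hc⟩ := ff_fin _ β _ c h'
  refine ⟨l, h0, fun i => ?_, hc⟩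
  have h2 := hB (e i)
  simpa using h2

/-- Affine Farkas lemma: a valid inequality is a nonnegative combination. -/
lemma farkas_implied (B : β → α → ℚ) (c : β → ℚ) (w : α → ℚ) (δ : ℚ) (x₀ : α → ℚ)
    (hx₀ : ∀ j, c j ≤ dotp (B j) x₀)
    (hbd : ∀ x, (∀ j, c j ≤ dotp (B j) x) → δ ≤ dotp w x) :
    ∃ l : β → ℚ, (∀ j, 0 ≤ l j) ∧ (∀ i, ∑ j, l j * B j i = w i) ∧ δ ≤ ∑ j, l j * c j := by
  classical
  set Bg : (β ⊕ Fin 3) → (α ⊕ Bool) → ℚ :=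
    Sum.elim (fun j => Sum.elim (B j) (fun s => cond s (-c j) 0))
      ![Sum.elim 0 (fun s => cond s 1 0),
        Sum.elim (fun i => -w i) (fun s => cond s δ (-1)),
        Sum.elim 0 (fun s => cond s 0 1)] with hBg
  set cg : (β ⊕ Fin 3) → ℚ := Sum.elim (fun _ => 0) ![0, 0, 1] with hcg
  have hnegdot : ∀ z : α → ℚ, dotp (fun i => -w i) z = -dotp w z := by
    intro z
    unfold dotp
    rw [← Finset.sum_neg_distrib]
    exact Finset.sum_congr rfl fun i _ => by ring
  have hinf : ¬ ∃ z : (α ⊕ Bool) → ℚ, ∀ p, cg p ≤ dotp (Bg p) z := by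
    rintro ⟨z, hz⟩
    have hrow : ∀ j, c j * z (Sum.inr true) ≤ dotp (B j) (z ∘ Sum.inl) := by
      intro j
      have h := hz (Sum.inl j)
      rw [hBg, hcg] at h
      simp only [Sum.elim_inl] at h
      rw [dotp_elim, dotp_bool] at h
      simp only [cond_true, cond_false, Function.comp_apply] at h
      linarith
    have htpos : 0 ≤ z (Sum.inr true) := by
      have h := hz (Sum.inr 0)
      rw [hBg, hcg] at h
      simp only [Sum.elim_inr, Matrix.cons_val_zero] at h
      rw [dotp_elim, dotp_bool] at h
      simp only [cond_true, cond_false, Function.comp_apply, dotp_zero_left'] at h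
      linarith
    have hobj : dotp w (z ∘ Sum.inl) + z (Sum.inr false) ≤ δ * z (Sum.inr true) := by
      have h := hz (Sum.inr 1)
      rw [hBg, hcg] at h
      simp only [Sum.elim_inr, Matrix.cons_val_one, Matrix.head_cons, Matrix.cons_val_zero] at h
      rw [dotp_elim, dotp_bool] at h
      simp only [cond_true, cond_false, Function.comp_apply] at h
      rw [hnegdot] at h
      linarith
    have hs1 : (1:ℚ) ≤ z (Sum.inr false) := by
      have h := hz (Sum.inr 2)
      rw [hBg, hcg] at h
      simp only [Sum.elim_inr, Matrix.cons_val_two, Matrix.tail_cons, Matrix.head_cons] at h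
      rw [dotp_elim, dotp_bool] at h
      simp only [cond_true, cond_false, Function.comp_apply, dotp_zero_left'] at h
      linarith
    rcases eq_or_lt_of_le htpos with hteq | htlt
    · have hB0 : ∀ j, 0 ≤ dotp (B j) (z ∘ Sum.inl) := by
        intro j; have := hrow j; rw [← hteq] at this; linarith
      have hwx : 0 ≤ dotp w (z ∘ Sum.inl) := by
        by_contra hneg
        push_neg at hneg
        set r : ℚ := (dotp w x₀ - δ + 1) / (-(dotp w (z ∘ Sum.inl))) with hr
        have hrpos : 0 ≤ r := by
          apply div_nonneg _ (by linarith)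
          have := hbd x₀ hx₀
          linarith
        have hfeas : ∀ j, c j ≤ dotp (B j) (x₀ + r • (z ∘ Sum.inl)) := by
          intro j
          rw [dotp_add_right', dotp_smul_right']
          have h1 := hx₀ j
          have h2 := hB0 j
          nlinarith
        have h3 := hbd _ hfeas
        rw [dotp_add_right', dotp_smul_right'] at h3
        have h4 : r * (-(dotp w (z ∘ Sum.inl))) = dotp w x₀ - δ + 1 := by
          rw [hr, div_mul_cancel₀ _ (by linarith : -(dotp w (z ∘ Sum.inl)) ≠ 0)]
        nlinarith
      rw [← hteq] at hobj
      linarith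
    · have hfeas : ∀ j, c j ≤ dotp (B j) ((z (Sum.inr true))⁻¹ • (z ∘ Sum.inl)) := by
        intro j
        rw [dotp_smul_right']
        have h1 := hrow j
        rw [← sub_nonneg]
        have heq : (z (Sum.inr true))⁻¹ * dotp (B j) (z ∘ Sum.inl) - c j
            = (z (Sum.inr true))⁻¹ * (dotp (B j) (z ∘ Sum.inl) - c j * z (Sum.inr true)) := by
          field_simp
        rw [heq]
        have := sub_nonneg.mpr h1
        positivity
      have h3 := hbd _ hfeas
      rw [dotp_smul_right'] at h3
      have h5 : δ * z (Sum.inr true) ≤ dotp w (z ∘ Sum.inl) := by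
        have h6 := mul_le_mul_of_nonneg_right h3 (le_of_lt htlt)
        calc δ * z (Sum.inr true) ≤ (z (Sum.inr true))⁻¹ * dotp w (z ∘ Sum.inl) * z (Sum.inr true) := by
              linarith
          _ = dotp w (z ∘ Sum.inl) := by field_simp
      linarith
  obtain ⟨l, h0, hcols, hval⟩ := ff Bg cg hinf
  have hcol1 : ∀ i0 : α, ∑ j, l (Sum.inl j) * B j i0 = l (Sum.inr 1) * w i0 := by
    intro i0
    have h := hcols (Sum.inl i0)
    rw [Fintype.sum_sum_type, Fin.sum_univ_three] at h
    simp only [hBg, Sum.elim_inl, Sum.elim_inr, Matrix.cons_val_zero, Matrix.cons_val_one,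
      Matrix.head_cons, Matrix.cons_val_two, Matrix.tail_cons, Pi.zero_apply,
      mul_zero, add_zero, zero_add, mul_neg] at h
    linarith
  have hcol2 : ∑ j, l (Sum.inl j) * c j = l (Sum.inr 0) + l (Sum.inr 1) * δ := by
    have h := hcols (Sum.inr true)
    rw [Fintype.sum_sum_type, Fin.sum_univ_three] at h
    simp only [hBg, Sum.elim_inl, Sum.elim_inr, Matrix.cons_val_zero, Matrix.cons_val_one,
      Matrix.head_cons, Matrix.cons_val_two, Matrix.tail_cons, cond_true,
      mul_zero, mul_one, add_zero, zero_add, mul_neg] at h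
    rw [Finset.sum_neg_distrib] at h
    linarith
  have hcol3 : l (Sum.inr 2) = l (Sum.inr 1) := by
    have h := hcols (Sum.inr false)
    rw [Fintype.sum_sum_type, Fin.sum_univ_three] at h
    simp only [hBg, Sum.elim_inl, Sum.elim_inr, Matrix.cons_val_zero, Matrix.cons_val_one,
      Matrix.head_cons, Matrix.cons_val_two, Matrix.tail_cons, cond_false,
      mul_zero, mul_one, add_zero, zero_add, mul_neg, Finset.sum_const_zero] at h
    linarith
  have hμpos : 0 < l (Sum.inr 1) := by
    rw [Fintype.sum_sum_type, Fin.sum_univ_three] at hval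
    simp only [hcg, Sum.elim_inl, Sum.elim_inr, Matrix.cons_val_zero, Matrix.cons_val_one,
      Matrix.head_cons, Matrix.cons_val_two, Matrix.tail_cons,
      mul_zero, mul_one, add_zero, zero_add, Finset.sum_const_zero] at hval
    linarith [hcol3, hval]
  set μ : ℚ := l (Sum.inr 1) with hμ
  have hμne : μ ≠ 0 := ne_of_gt hμpos
  refine ⟨fun j => l (Sum.inl j) / μ, fun j => div_nonneg (h0 _) (le_of_lt hμpos),
    fun i => ?_, ?_⟩
  · have hsum : ∑ j, l (Sum.inl j) / μ * B j i = (∑ j, l (Sum.inl j) * B j i) / μ := by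
      rw [Finset.sum_div]
      exact Finset.sum_congr rfl fun j _ => by ring
    rw [hsum, hcol1 i]
    field_simp
  · have hsum : ∑ j, l (Sum.inl j) / μ * c j = (∑ j, l (Sum.inl j) * c j) / μ := by
      rw [Finset.sum_div]
      exact Finset.sum_congr rfl fun j _ => by ring
    rw [hsum, hcol2]
    have hτ0 : 0 ≤ l (Sum.inr 0) := h0 _
    rw [le_div_iff₀ hμpos]
    nlinarith

end Engine3

section Engine4

variable {α β : Type} [Fintype α] [Fintype β]

/-- Weak duality. -/
lemma weak_duality (B : β → α → ℚ) (c : β → ℚ) (w : α → ℚ) (l : β → ℚ)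
    (hl0 : ∀ j, 0 ≤ l j) (hlB : ∀ i, ∑ j, l j * B j i = w i)
    (y : α → ℚ) (hy : ∀ j, c j ≤ dotp (B j) y) :
    ∑ j, l j * c j ≤ dotp w y := by
  have h1 : ∑ j, l j * c j ≤ ∑ j, l j * dotp (B j) y :=
    Finset.sum_le_sum fun j _ => mul_le_mul_of_nonneg_left (hy j) (hl0 j)
  have h2 : ∑ j, l j * dotp (B j) y = dotp w y := by
    rw [sum_mul_dotp]
    congr 1
    funext i
    exact hlB i
  linarith

/-- LP optimality: with a feasible primal point and feasible dual multipliers,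
there are an optimal primal point and dual multipliers with equal objective value. -/
lemma lp_opt (B : β → α → ℚ) (c : β → ℚ) (w : α → ℚ) (x₀ : α → ℚ)
    (hx₀ : ∀ j, c j ≤ dotp (B j) x₀)
    (lam0 : β → ℚ) (hlam00 : ∀ j, 0 ≤ lam0 j) (hlam0B : ∀ i, ∑ j, lam0 j * B j i = w i) :
    ∃ (x : α → ℚ) (l : β → ℚ), (∀ j, c j ≤ dotp (B j) x) ∧ (∀ j, 0 ≤ l j) ∧
      (∀ i, ∑ j, l j * B j i = w i) ∧ (∑ j, l j * c j = dotp w x) ∧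
      (∀ y, (∀ j, c j ≤ dotp (B j) y) → dotp w x ≤ dotp w y) := by
  classical
  set Row : ((β ⊕ β) ⊕ ((α ⊕ α) ⊕ Unit)) → ((α ⊕ β) → ℚ) :=
    Sum.elim
      (Sum.elim (fun j => Sum.elim (B j) 0)
                (fun j => Sum.elim 0 (fun j' => if j' = j then 1 else 0)))
      (Sum.elim (Sum.elim (fun i => Sum.elim 0 (fun j => B j i))
                          (fun i => Sum.elim 0 (fun j => -B j i)))
                (fun _ => Sum.elim (fun i => -w i) c)) with hRow
  set rhs : ((β ⊕ β) ⊕ ((α ⊕ α) ⊕ Unit)) → ℚ :=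
    Sum.elim (Sum.elim c 0) (Sum.elim (Sum.elim w (fun i => -w i)) 0) with hrhs
  have hnegdot : ∀ u z : α → ℚ, dotp (fun i => -u i) z = -dotp u z := by
    intro u z
    unfold dotp
    rw [← Finset.sum_neg_distrib]
    exact Finset.sum_congr rfl fun i _ => by ring
  have hnegdot' : ∀ (u : β → ℚ) (z : β → ℚ), dotp (fun j => -u j) z = -dotp u z := by
    intro u z
    unfold dotp
    rw [← Finset.sum_neg_distrib]
    exact Finset.sum_congr rfl fun i _ => by ring
  have hfeas : ∃ z : (α ⊕ β) → ℚ, ∀ p, rhs p ≤ dotp (Row p) z := by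
    by_contra hinf
    obtain ⟨L, hL0, hLcols, hLval⟩ := ff Row rhs hinf
    set yv : α → ℚ := fun i => L (Sum.inr (Sum.inl (Sum.inl i))) - L (Sum.inr (Sum.inl (Sum.inr i))) with hyv
    have Ecol1 : ∀ i, ∑ j, L (Sum.inl (Sum.inl j)) * B j i = L (Sum.inr (Sum.inr ())) * w i := by
      intro i
      have h := hLcols (Sum.inl i)
      rw [Fintype.sum_sum_type, Fintype.sum_sum_type, Fintype.sum_sum_type,
        Fintype.sum_sum_type] at h
      simp only [hRow, Sum.elim_inl, Sum.elim_inr, Fintype.sum_unique, Pi.zero_apply,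
        mul_zero, Finset.sum_const_zero, add_zero, zero_add, mul_neg,
        Finset.sum_neg_distrib, PUnit.default_eq_unit] at h
      linarith
    have Ecol2 : ∀ j, L (Sum.inl (Sum.inr j)) + dotp (B j) yv + L (Sum.inr (Sum.inr ())) * c j = 0 := by
      intro j
      have h := hLcols (Sum.inr j)
      rw [Fintype.sum_sum_type, Fintype.sum_sum_type, Fintype.sum_sum_type,
        Fintype.sum_sum_type] at h
      simp only [hRow, Sum.elim_inl, Sum.elim_inr, Fintype.sum_unique, Pi.zero_apply,
        mul_zero, Finset.sum_const_zero, add_zero, zero_add, mul_neg, mul_ite, mul_one,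
        Finset.sum_neg_distrib, Finset.sum_ite_eq', Finset.sum_ite_eq, Finset.mem_univ,
        if_true, PUnit.default_eq_unit] at h
      have hd : dotp (B j) yv = ∑ i, L (Sum.inr (Sum.inl (Sum.inl i))) * B j i
          - ∑ i, L (Sum.inr (Sum.inl (Sum.inr i))) * B j i := by
        unfold dotp
        rw [hyv, ← Finset.sum_sub_distrib]
        exact Finset.sum_congr rfl fun i _ => by ring
      rw [hd]
      linarith
    have Eval : 0 < ∑ j, L (Sum.inl (Sum.inl j)) * c j + dotp w yv := by
      have h := hLval
      rw [Fintype.sum_sum_type, Fintype.sum_sum_type, Fintype.sum_sum_type,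
        Fintype.sum_sum_type] at h
      simp only [hrhs, hRow, Sum.elim_inl, Sum.elim_inr, Fintype.sum_unique, Pi.zero_apply,
        mul_zero, Finset.sum_const_zero, add_zero, zero_add, mul_neg,
        Finset.sum_neg_distrib, PUnit.default_eq_unit] at h
      have hd : dotp w yv = ∑ i, L (Sum.inr (Sum.inl (Sum.inl i))) * w i
          - ∑ i, L (Sum.inr (Sum.inl (Sum.inr i))) * w i := by
        unfold dotp
        rw [hyv, ← Finset.sum_sub_distrib]
        exact Finset.sum_congr rfl fun i _ => by ring
      rw [hd]
      linarith
    have hθ0 : 0 ≤ L (Sum.inr (Sum.inr ())) := hL0 _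
    rcases eq_or_lt_of_le hθ0 with hθeq | hθlt
    · -- L (Sum.inr (Sum.inr ())) = 0
      have h1 : ∑ j, L (Sum.inl (Sum.inl j)) * c j ≤ 0 := by
        have hw : ∀ i, ∑ j, L (Sum.inl (Sum.inl j)) * B j i = 0 := by
          intro i; rw [Ecol1 i, ← hθeq, zero_mul]
        have := weak_duality B c (fun _ => 0) (fun j => L (Sum.inl (Sum.inl j)))
          (fun j => hL0 _) (fun i => by simpa using hw i) x₀ hx₀
        simpa [dotp] using this
      have h2 : dotp w yv ≤ 0 := by
        have hrw : dotp w yv = ∑ j, lam0 j * dotp (B j) yv := by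
          rw [sum_mul_dotp]
          congr 1
          funext i
          exact (hlam0B i).symm
        rw [hrw]
        apply Finset.sum_nonpos
        intro j _
        have hE := Ecol2 j
        rw [← hθeq, zero_mul, add_zero] at hE
        have hS : 0 ≤ L (Sum.inl (Sum.inr j)) := hL0 _
        have hval2 : dotp (B j) yv = -L (Sum.inl (Sum.inr j)) := by linarith
        rw [hval2]
        have := mul_nonneg (hlam00 j) hS
        linarith
      linarith
    · -- L (Sum.inr (Sum.inr ())) > 0
      have hxh : ∀ j, c j ≤ dotp (B j) ((-(L (Sum.inr (Sum.inr ())))⁻¹) • yv) := by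
        intro j
        rw [dotp_smul_right']
        have hE := Ecol2 j
        have hS : 0 ≤ L (Sum.inl (Sum.inr j)) := hL0 _
        have hexp : -(L (Sum.inr (Sum.inr ())))⁻¹ * dotp (B j) yv = (L (Sum.inr (Sum.inr ())))⁻¹ * L (Sum.inl (Sum.inr j)) + c j := by
          have : dotp (B j) yv = -L (Sum.inl (Sum.inr j)) - L (Sum.inr (Sum.inr ())) * c j := by linarith
          rw [this]
          field_simp
          ring
        rw [hexp]
        have := mul_nonneg (inv_nonneg.mpr hθ0) hS
        linarith
      have hdualB : ∀ i, ∑ j, L (Sum.inl (Sum.inl j)) / L (Sum.inr (Sum.inr ())) * B j i = w i := by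
        intro i
        have hs : ∑ j, L (Sum.inl (Sum.inl j)) / L (Sum.inr (Sum.inr ())) * B j i
            = (∑ j, L (Sum.inl (Sum.inl j)) * B j i) / L (Sum.inr (Sum.inr ())) := by
          rw [Finset.sum_div]; exact Finset.sum_congr rfl fun j _ => by ring
        rw [hs, Ecol1 i]
        field_simp
      have hwd := weak_duality B c w (fun j => L (Sum.inl (Sum.inl j)) / L (Sum.inr (Sum.inr ())))
        (fun j => div_nonneg (hL0 _) (le_of_lt hθlt)) hdualB _ hxh
      rw [dotp_smul_right'] at hwd
      have hsum : ∑ j, L (Sum.inl (Sum.inl j)) / L (Sum.inr (Sum.inr ())) * c j = (∑ j, L (Sum.inl (Sum.inl j)) * c j) / L (Sum.inr (Sum.inr ())) := by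
        rw [Finset.sum_div]; exact Finset.sum_congr rfl fun j _ => by ring
      rw [hsum] at hwd
      rw [div_le_iff₀ hθlt] at hwd
      have hcan : -(L (Sum.inr (Sum.inr ())))⁻¹ * dotp w yv * L (Sum.inr (Sum.inr ())) = -dotp w yv := by
        field_simp
      linarith
  obtain ⟨z, hz⟩ := hfeas
  refine ⟨z ∘ Sum.inl, z ∘ Sum.inr, ?_, ?_, ?_, ?_, ?_⟩
  · intro j
    have h := hz (Sum.inl (Sum.inl j))
    rw [hRow, hrhs] at h
    simp only [Sum.elim_inl] at h
    rw [dotp_elim] at h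
    simpa [dotp_zero_left'] using h
  · intro j
    have h := hz (Sum.inl (Sum.inr j))
    rw [hRow, hrhs] at h
    simp only [Sum.elim_inl, Sum.elim_inr] at h
    rw [dotp_elim] at h
    simp only [dotp_zero_left', zero_add, Pi.zero_apply] at h
    have hd : dotp (fun j' => if j' = j then (1:ℚ) else 0) (z ∘ Sum.inr) = z (Sum.inr j) := by
      unfold dotp
      simp [ite_mul, Finset.sum_ite_eq']
    rw [hd] at h
    exact h
  · intro i
    have hp := hz (Sum.inr (Sum.inl (Sum.inl i)))
    have hm := hz (Sum.inr (Sum.inl (Sum.inr i)))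
    rw [hRow, hrhs] at hp hm
    simp only [Sum.elim_inl, Sum.elim_inr] at hp hm
    rw [dotp_elim] at hp hm
    simp only [dotp_zero_left', zero_add] at hp hm
    rw [hnegdot'] at hm
    have hd : dotp (fun j => B j i) (z ∘ Sum.inr) = ∑ j, z (Sum.inr j) * B j i := by
      unfold dotp
      exact Finset.sum_congr rfl fun j _ => by
        simp only [Function.comp_apply]; ring
    rw [hd] at hp hm
    have : (∑ j, z (Sum.inr j) * B j i) = w i := le_antisymm (by linarith) hp
    simpa using this
  · -- equality of objectives
    show ∑ j, z (Sum.inr j) * c j = dotp w (z ∘ Sum.inl)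
    have h4 := hz (Sum.inr (Sum.inr ()))
    rw [hRow, hrhs] at h4
    simp only [Sum.elim_inr, Pi.zero_apply] at h4
    rw [dotp_elim, hnegdot] at h4
    have hd : dotp c (z ∘ Sum.inr) = ∑ j, z (Sum.inr j) * c j := by
      unfold dotp
      exact Finset.sum_congr rfl fun j _ => by
        simp only [Function.comp_apply]; ring
    rw [hd] at h4
    have hfeasx : ∀ j, c j ≤ dotp (B j) (z ∘ Sum.inl) := by
      intro j
      have h := hz (Sum.inl (Sum.inl j))
      rw [hRow, hrhs] at h
      simp only [Sum.elim_inl] at h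
      rw [dotp_elim] at h
      simpa [dotp_zero_left'] using h
    have hlB : ∀ i, ∑ j, z (Sum.inr j) * B j i = w i := by
      intro i
      have hp := hz (Sum.inr (Sum.inl (Sum.inl i)))
      have hm := hz (Sum.inr (Sum.inl (Sum.inr i)))
      rw [hRow, hrhs] at hp hm
      simp only [Sum.elim_inl, Sum.elim_inr] at hp hm
      rw [dotp_elim] at hp hm
      simp only [dotp_zero_left', zero_add] at hp hm
      rw [hnegdot'] at hm
      have hd2 : dotp (fun j => B j i) (z ∘ Sum.inr) = ∑ j, z (Sum.inr j) * B j i := by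
        unfold dotp
        exact Finset.sum_congr rfl fun j _ => by
          simp only [Function.comp_apply]; ring
      rw [hd2] at hp hm
      linarith
    have hl0 : ∀ j, 0 ≤ z (Sum.inr j) := by
      intro j
      have h := hz (Sum.inl (Sum.inr j))
      rw [hRow, hrhs] at h
      simp only [Sum.elim_inl, Sum.elim_inr] at h
      rw [dotp_elim] at h
      simp only [dotp_zero_left', zero_add, Pi.zero_apply] at h
      have hd2 : dotp (fun j' => if j' = j then (1:ℚ) else 0) (z ∘ Sum.inr) = z (Sum.inr j) := by
        unfold dotp
        simp [ite_mul, Finset.sum_ite_eq']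
      rw [hd2] at h
      exact h
    have hwk : ∑ j, z (Sum.inr j) * c j ≤ dotp w (z ∘ Sum.inl) :=
      weak_duality B c w (fun j => z (Sum.inr j)) hl0 hlB _ hfeasx
    linarith [hwk, h4]
  · intro y hy
    have h4 := hz (Sum.inr (Sum.inr ()))
    rw [hRow, hrhs] at h4
    simp only [Sum.elim_inr, Pi.zero_apply] at h4
    rw [dotp_elim, hnegdot] at h4
    have hd : dotp c (z ∘ Sum.inr) = ∑ j, z (Sum.inr j) * c j := by
      unfold dotp
      exact Finset.sum_congr rfl fun j _ => by
        simp only [Function.comp_apply]; ring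
    rw [hd] at h4
    have hlB : ∀ i, ∑ j, z (Sum.inr j) * B j i = w i := by
      intro i
      have hp := hz (Sum.inr (Sum.inl (Sum.inl i)))
      have hm := hz (Sum.inr (Sum.inl (Sum.inr i)))
      rw [hRow, hrhs] at hp hm
      simp only [Sum.elim_inl, Sum.elim_inr] at hp hm
      rw [dotp_elim] at hp hm
      simp only [dotp_zero_left', zero_add] at hp hm
      rw [hnegdot'] at hm
      have hd2 : dotp (fun j => B j i) (z ∘ Sum.inr) = ∑ j, z (Sum.inr j) * B j i := by
        unfold dotp
        exact Finset.sum_congr rfl fun j _ => by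
          simp only [Function.comp_apply]; ring
      rw [hd2] at hp hm
      linarith
    have hl0 : ∀ j, 0 ≤ z (Sum.inr j) := by
      intro j
      have h := hz (Sum.inl (Sum.inr j))
      rw [hRow, hrhs] at h
      simp only [Sum.elim_inl, Sum.elim_inr] at h
      rw [dotp_elim] at h
      simp only [dotp_zero_left', zero_add, Pi.zero_apply] at h
      have hd2 : dotp (fun j' => if j' = j then (1:ℚ) else 0) (z ∘ Sum.inr) = z (Sum.inr j) := by
        unfold dotp
        simp [ite_mul, Finset.sum_ite_eq']
      rw [hd2] at h
      exact h
    have hwk : ∑ j, z (Sum.inr j) * c j ≤ dotp w y :=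
      weak_duality B c w (fun j => z (Sum.inr j)) hl0 hlB y hy
    linarith [hwk, h4]

end Engine4

section MainHelpers

variable {α : Type} [Fintype α]

lemma dotp_add_left' (w x y : α → ℚ) : dotp (w + x) y = dotp w y + dotp x y := by
  simp [dotp, add_mul, Finset.sum_add_distrib]

lemma dotp_neg_left' (u x : α → ℚ) : dotp (fun i => -u i) x = -dotp u x := by
  unfold dotp
  rw [← Finset.sum_neg_distrib]
  exact Finset.sum_congr rfl fun i _ => by ring

/-- Characterization of the normal cone of the smallest face containing `S`. -/
lemma normalCone_char (C S F : Set (α → ℚ)) (h0 : (0 : α → ℚ) ∈ C)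
    (hdb : ∀ x ∈ C, x + x ∈ C)
    (hSF : IsSmallestFaceContaining C S F) :
    normalCone C F = {u | u ∈ dualCone C ∧ ∀ s ∈ S, dotp u s = 0} := by
  obtain ⟨⟨hFne, w₀, hFw₀⟩, hSsub, hmin⟩ := hSF
  ext u
  constructor
  · intro hu
    have hface : ∀ y ∈ F, y ∈ C ∧ dotp u y = 0 ∧ ∀ t ∈ C, dotp u y ≤ dotp u t := by
      intro y hy
      obtain ⟨hyC, hymin⟩ := hu hy
      have h2 : dotp u y ≤ dotp u 0 := hymin 0 h0
      rw [dotp_zero_right'] at h2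
      have h3 : dotp u y ≤ dotp u (y + y) := hymin _ (hdb y hyC)
      rw [dotp_add_right'] at h3
      exact ⟨hyC, le_antisymm h2 (by linarith), hymin⟩
    obtain ⟨x, hx⟩ := hFne
    obtain ⟨hxC, hx0, hxmin⟩ := hface x hx
    refine ⟨fun t ht => ?_, fun s hs => (hface s (hSsub hs)).2.1⟩
    have := hxmin t ht
    linarith
  · rintro ⟨hud, hu0⟩
    intro y hy
    have hfaceu : IsFaceOf C (faceOf C u) := by
      refine ⟨⟨0, h0, fun t ht => ?_⟩, u, rfl⟩
      rw [dotp_zero_right']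
      exact hud t ht
    have hSsubu : S ⊆ faceOf C u := by
      intro s hs
      have hsF := hSsub hs
      have hsC : s ∈ C := by
        rw [hFw₀] at hsF
        exact hsF.1
      exact ⟨hsC, fun t ht => by rw [hu0 s hs]; exact hud t ht⟩
    exact hmin (faceOf C u) hfaceu hSsubu hy

end MainHelpers


/-- `N_C(tilde-face_w(C_v)) = tilde-face_v(C^∨_w)`. -/
theorem normalCone_tildeFace_duality (m d : ℕ) (C : Set ((Fin m ⊕ Fin d) → ℚ))
    (hC : IsPolyhedralCone C) (hfull : Submodule.span ℚ C = ⊤)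
    (v : Fin d → ℚ) (w : Fin m → ℚ)
    (hv : v ∈ (fun x : (Fin m ⊕ Fin d) → ℚ => x ∘ Sum.inr) '' C)
    (hw : w ∈ (fun u : (Fin m ⊕ Fin d) → ℚ => u ∘ Sum.inl) '' dualCone C)
    (F G : Set ((Fin m ⊕ Fin d) → ℚ))
    (hFt : IsSmallestFaceContaining C
      {p : (Fin m ⊕ Fin d) → ℚ |
        p ∘ Sum.inl ∈ faceOf {x' : Fin m → ℚ | Sum.elim x' v ∈ C} w ∧ p ∘ Sum.inr = v} F)
    (hGt : IsSmallestFaceContaining (dualCone C)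
      {u : (Fin m ⊕ Fin d) → ℚ |
        u ∘ Sum.inr ∈ faceOf {y : Fin d → ℚ | Sum.elim w y ∈ dualCone C} v ∧
          u ∘ Sum.inl = w} G) :
    normalCone C F = G := by
  classical
  obtain ⟨r, A, hCA⟩ := hC
  have memC : ∀ x, x ∈ C ↔ ∀ i, 0 ≤ dotp (A i) x := by
    intro x; rw [hCA]; exact Iff.rfl
  have h0C : (0 : (Fin m ⊕ Fin d) → ℚ) ∈ C :=
    (memC 0).mpr fun i => by rw [dotp_zero_right']
  have hdbC : ∀ x ∈ C, x + x ∈ C := by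
    intro x hx
    refine (memC _).mpr fun i => ?_
    rw [dotp_add_right']
    have := (memC x).mp hx i
    linarith
  have helim : ∀ x : (Fin m ⊕ Fin d) → ℚ, Sum.elim (x ∘ Sum.inl) (x ∘ Sum.inr) = x := by
    intro x; funext i; cases i <;> rfl
  have hdotelim : ∀ (u : (Fin m ⊕ Fin d) → ℚ) (a : Fin m → ℚ) (b : Fin d → ℚ),
      dotp u (Sum.elim a b) = dotp (u ∘ Sum.inl) a + dotp (u ∘ Sum.inr) b := by
    intro u a b; rw [dotp_split]; rfl
  obtain ⟨xc, hxcC, hxc2p⟩ := hv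
  obtain ⟨u₀, hu₀C, hu₀1p⟩ := hw
  have hxc2 : xc ∘ Sum.inr = v := hxc2p
  have hu₀1 : u₀ ∘ Sum.inl = w := hu₀1p
  set Bv : Fin r → Fin m → ℚ := fun j => (A j) ∘ Sum.inl with hBv
  set Av2 : Fin r → Fin d → ℚ := fun j => (A j) ∘ Sum.inr with hAv2
  set cv : Fin r → ℚ := fun j => -(dotp (Av2 j) v) with hcv
  have hfeas_iff : ∀ x' : Fin m → ℚ, (∀ j, cv j ≤ dotp (Bv j) x') ↔ Sum.elim x' v ∈ C := by
    intro x'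
    rw [memC]
    constructor
    · intro h j
      rw [hdotelim]
      have h2 := h j
      simp only [hcv, hBv, hAv2] at h2 ⊢
      linarith
    · intro h j
      have h2 := h j
      rw [hdotelim] at h2
      simp only [hcv, hBv, hAv2] at h2 ⊢
      linarith
  have hxfeas : ∀ j, cv j ≤ dotp (Bv j) (xc ∘ Sum.inl) := by
    refine (hfeas_iff _).mpr ?_
    have h1 : Sum.elim (xc ∘ Sum.inl) v = xc := by rw [← hxc2]; exact helim xc
    rw [h1]; exact hxcC
  have hbound : ∀ x', (∀ j, cv j ≤ dotp (Bv j) x') → -(dotp (u₀ ∘ Sum.inr) v) ≤ dotp w x' := by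
    intro x' hx'
    have hC' := (hfeas_iff x').mp hx'
    have h0 := hu₀C _ hC'
    rw [hdotelim, hu₀1] at h0
    linarith
  obtain ⟨lam0, hlam00, hlam0B, -⟩ := farkas_implied Bv cv w _ _ hxfeas hbound
  obtain ⟨xstar, lam, hxstarF, hlam0, hlamB, hlamc, hxstaropt⟩ :=
    lp_opt Bv cv w _ hxfeas lam0 hlam00 hlam0B
  set μ : ℚ := dotp w xstar with hμ
  set B₂ : (Fin r ⊕ Unit) → Fin m → ℚ := Sum.elim Bv (fun _ i => -w i) with hB₂
  set c₂ : (Fin r ⊕ Unit) → ℚ := Sum.elim cv (fun _ => -μ) with hc₂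
  have hP₂ : ∀ x' : Fin m → ℚ, (∀ p, c₂ p ≤ dotp (B₂ p) x') ↔
      (Sum.elim x' v ∈ C ∧ dotp w x' ≤ μ) := by
    intro x'
    constructor
    · intro h
      refine ⟨(hfeas_iff x').mp (fun j => h (Sum.inl j)), ?_⟩
      have h2 := h (Sum.inr ())
      simp only [hB₂, hc₂, Sum.elim_inr] at h2
      rw [dotp_neg_left'] at h2
      linarith
    · rintro ⟨h1, h2⟩
      rintro (j | un)
      · simpa [hB₂, hc₂] using (hfeas_iff x').mpr h1 j
      · simp only [hB₂, hc₂, Sum.elim_inr]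
        rw [dotp_neg_left']
        linarith
  set SFd : Set ((Fin m ⊕ Fin d) → ℚ) :=
    {p | p ∘ Sum.inl ∈ faceOf {x' : Fin m → ℚ | Sum.elim x' v ∈ C} w ∧ p ∘ Sum.inr = v}
    with hSFd
  have hSFmem : ∀ s, s ∈ SFd ↔ (s ∘ Sum.inr = v ∧ ∀ p, c₂ p ≤ dotp (B₂ p) (s ∘ Sum.inl)) := by
    intro s
    rw [hSFd]
    simp only [Set.mem_setOf_eq, faceOf]
    constructor
    · rintro ⟨⟨hmem, hminim⟩, h2⟩
      refine ⟨h2, (hP₂ _).mpr ⟨hmem, ?_⟩⟩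
      have h5 := hminim xstar ((hfeas_iff xstar).mp hxstarF)
      rw [← hμ] at h5
      exact h5
    · rintro ⟨h2, h⟩
      obtain ⟨hmem, hle⟩ := (hP₂ _).mp h
      refine ⟨⟨hmem, fun y hy => ?_⟩, h2⟩
      have h3 := hxstaropt y ((hfeas_iff y).mpr hy)
      linarith
  have hxstarP₂ : ∀ p, c₂ p ≤ dotp (B₂ p) xstar :=
    (hP₂ xstar).mpr ⟨(hfeas_iff xstar).mp hxstarF, le_of_eq hμ.symm⟩
  obtain ⟨ps, hpsfeas, hpsrel⟩ := relint_exists B₂ c₂ xstar hxstarP₂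
  set sstar : (Fin m ⊕ Fin d) → ℚ := Sum.elim ps v with hsstar
  have hsstarC : sstar ∈ C := ((hP₂ ps).mp hpsfeas).1
  have hpsμ : dotp w ps = μ := by
    have h1 := ((hP₂ ps).mp hpsfeas).2
    have h2 := hxstaropt ps ((hfeas_iff ps).mpr hsstarC)
    linarith
  have hsstarSF : sstar ∈ SFd := (hSFmem sstar).mpr ⟨rfl, hpsfeas⟩
  have hSFprops : ∀ s ∈ SFd, s ∈ C ∧ s ∘ Sum.inr = v ∧ dotp w (s ∘ Sum.inl) = μ := by
    intro s hs
    obtain ⟨h2, hfe⟩ := (hSFmem s).mp hs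
    obtain ⟨hC', hle⟩ := (hP₂ _).mp hfe
    have hsC : s ∈ C := by
      have h3 : Sum.elim (s ∘ Sum.inl) v = s := by rw [← h2]; exact helim s
      rwa [h3] at hC'
    have hge := hxstaropt _ ((hfeas_iff _).mpr hC')
    exact ⟨hsC, h2, le_antisymm hle hge⟩
  have hrelC : ∀ s ∈ SFd, ∃ ε : ℚ, 0 < ε ∧ sstar + ε • (sstar - s) ∈ SFd := by
    intro s hs
    obtain ⟨h2, hfe⟩ := (hSFmem s).mp hs
    obtain ⟨ε, hε, hq⟩ := hpsrel _ hfe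
    refine ⟨ε, hε, ?_⟩
    have hEQ : sstar + ε • (sstar - s) = Sum.elim (ps + ε • (ps - s ∘ Sum.inl)) v := by
      funext i
      cases i with
      | inl i0 =>
        simp [hsstar, Pi.add_apply, Pi.smul_apply, Pi.sub_apply, smul_eq_mul]
      | inr i2 =>
        have h4 : s (Sum.inr i2) = v i2 := congrFun h2 i2
        simp [hsstar, Pi.add_apply, Pi.smul_apply, Pi.sub_apply, smul_eq_mul, h4]
    rw [hEQ]
    exact (hSFmem _).mpr ⟨rfl, hq⟩
  set Ist : Finset (Fin r) := Finset.univ.filter (fun i => dotp (A i) sstar = 0) with hIst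
  have htight : ∀ s ∈ SFd, ∀ i ∈ Ist, dotp (A i) s = 0 := by
    intro s hs i hi
    have hi0 : dotp (A i) sstar = 0 := by
      have := Finset.mem_filter.mp hi
      exact this.2
    obtain ⟨ε, hε, hmem⟩ := hrelC s hs
    have hC1 : sstar + ε • (sstar - s) ∈ C := (hSFprops _ hmem).1
    have h1 : 0 ≤ dotp (A i) (sstar + ε • (sstar - s)) := (memC _).mp hC1 i
    rw [dotp_add_right', dotp_smul_right', dotp_sub_right', hi0] at h1
    have hsC : s ∈ C := (hSFprops s hs).1
    have h2 : 0 ≤ dotp (A i) s := (memC _).mp hsC i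
    nlinarith
  have hweakG : ∀ u, u ∈ dualCone C → u ∘ Sum.inl = w → -μ ≤ dotp (u ∘ Sum.inr) v := by
    intro u hu h1
    have h2 : 0 ≤ dotp u sstar := hu sstar hsstarC
    rw [hsstar, hdotelim, h1, hpsμ] at h2
    linarith
  -- nonnegative combinations of rows are in the dual cone
  have hdualmem : ∀ η : Fin r → ℚ, (∀ j, 0 ≤ η j) →
      (fun i' => ∑ j, η j * A j i') ∈ dualCone C := by
    intro η hη x hx
    have h1 : dotp (fun i' => ∑ j, η j * A j i') x = ∑ j, η j * dotp (A j) x :=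
      (sum_mul_dotp η A x).symm
    rw [h1]
    exact Finset.sum_nonneg fun j _ =>
      mul_nonneg (hη j) ((memC x).mp hx j)
  have huinr : ∀ η : Fin r → ℚ,
      dotp ((fun i' => ∑ j, η j * A j i') ∘ Sum.inr) v = ∑ j, η j * dotp (Av2 j) v := by
    intro η
    rw [sum_mul_dotp]
    congr 1
  have hlamB' : ∀ i0, ∑ j, lam j * A j (Sum.inl i0) = w i0 := hlamB
  have hcveq : ∀ l' : Fin r → ℚ, ∑ j, l' j * cv j = -∑ j, l' j * dotp (Av2 j) v := by
    intro l'
    rw [← Finset.sum_neg_distrib]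
    refine Finset.sum_congr rfl fun j _ => ?_
    simp only [hcv]; ring
  have hlamdot : ∑ j, lam j * dotp (Av2 j) v = -μ := by
    have h1 := hcveq lam
    rw [hlamc] at h1
    linarith
  have hcomp : ∀ i : Fin r, ∃ η : Fin r → ℚ, (∀ j, 0 ≤ η j) ∧ (i ∈ Ist → 0 < η i) ∧
      (∀ i0, ∑ j, η j * A j (Sum.inl i0) = w i0) ∧ (∑ j, η j * dotp (Av2 j) v = -μ) := by
    intro i
    by_cases hi : i ∈ Ist
    case neg =>
      exact ⟨lam, hlam0, fun h => absurd h hi, hlamB', hlamdot⟩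
    case pos =>
      have hwobj : ∀ x' : Fin m → ℚ, dotp (fun i0 => -(A i (Sum.inl i0))) x'
          = -(dotp (Bv i) x') := by
        intro x'
        unfold dotp
        rw [← Finset.sum_neg_distrib]
        refine Finset.sum_congr rfl fun i0 _ => ?_
        simp only [hBv, Function.comp_apply]
        ring
      have hbd2 : ∀ x', (∀ p, c₂ p ≤ dotp (B₂ p) x') →
          dotp (Av2 i) v ≤ dotp (fun i0 => -(A i (Sum.inl i0))) x' := by
        intro x' hx'
        have hs : Sum.elim x' v ∈ SFd := (hSFmem _).mpr ⟨rfl, hx'⟩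
        have ht := htight _ hs i hi
        rw [hdotelim] at ht
        have e1 : dotp ((A i) ∘ Sum.inr) v = dotp (Av2 i) v := rfl
        have e2 : dotp ((A i) ∘ Sum.inl) x' = dotp (Bv i) x' := rfl
        rw [hwobj]
        linarith
      obtain ⟨l2, hl20, hl2B, hl2c⟩ := farkas_implied B₂ c₂ _ _ ps hpsfeas hbd2
      have hcols : ∀ i0, ∑ j, l2 (Sum.inl j) * A j (Sum.inl i0)
          - l2 (Sum.inr ()) * w i0 = -(A i (Sum.inl i0)) := by
        intro i0
        have h := hl2B i0
        rw [Fintype.sum_sum_type] at h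
        simp only [Fintype.sum_unique, hB₂, Sum.elim_inl, Sum.elim_inr,
          PUnit.default_eq_unit, mul_neg] at h
        have e3 : ∑ j, l2 (Sum.inl j) * Bv j i0 = ∑ j, l2 (Sum.inl j) * A j (Sum.inl i0) := rfl
        rw [e3] at h
        linarith
      have hval2 : dotp (Av2 i) v ≤ ∑ j, l2 (Sum.inl j) * cv j - l2 (Sum.inr ()) * μ := by
        have h := hl2c
        rw [Fintype.sum_sum_type] at h
        simp only [Fintype.sum_unique, hc₂, Sum.elim_inl, Sum.elim_inr,
          PUnit.default_eq_unit, mul_neg] at h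
        linarith
      have hτ0 : 0 ≤ l2 (Sum.inr ()) := hl20 _
      have hsum3 : ∀ (a : Fin r → ℚ) (X : Fin r → ℚ),
          ∑ j, (a j + if j = i then 1 else 0) * X j = ∑ j, a j * X j + X i := by
        intro a X
        have h1 : ∀ j ∈ Finset.univ, (a j + if j = i then 1 else 0) * X j
            = a j * X j + (if j = i then X j else 0) := by
          intro j _
          by_cases h : j = i <;> simp [h] <;> ring
        rw [Finset.sum_congr rfl h1, Finset.sum_add_distrib,
          Finset.sum_ite_eq' Finset.univ i X]
        simp
      rcases eq_or_lt_of_le hτ0 with hτeq | hτlt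
      · -- multiplier on the objective row is zero
        set η : Fin r → ℚ := fun j => lam j + (l2 (Sum.inl j) + if j = i then 1 else 0) with hη
        have hη0 : ∀ j, 0 ≤ η j := by
          intro j
          simp only [hη]
          have h1 := hlam0 j
          have h2 := hl20 (Sum.inl j)
          split <;> linarith
        have hsplit : ∀ X : Fin r → ℚ, ∑ j, η j * X j
            = ∑ j, lam j * X j + (∑ j, l2 (Sum.inl j) * X j + X i) := by
          intro X
          calc ∑ j, η j * X j
              = ∑ j, (lam j * X j + (l2 (Sum.inl j) + if j = i then 1 else 0) * X j) :=
                Finset.sum_congr rfl fun j _ => by simp only [hη]; ring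
            _ = ∑ j, lam j * X j + ∑ j, (l2 (Sum.inl j) + if j = i then 1 else 0) * X j :=
                Finset.sum_add_distrib
            _ = ∑ j, lam j * X j + (∑ j, l2 (Sum.inl j) * X j + X i) := by rw [hsum3]
        have hcoleq : ∀ i0, ∑ j, η j * A j (Sum.inl i0) = w i0 := by
          intro i0
          rw [hsplit]
          have h1 := hcols i0
          rw [← hτeq] at h1
          have h2 := hlamB' i0
          simp only [zero_mul, sub_zero] at h1
          linarith
        have hvaleq : ∑ j, η j * dotp (Av2 j) v = -μ := by
          have hZle : ∑ j, l2 (Sum.inl j) * dotp (Av2 j) v + dotp (Av2 i) v ≤ 0 := by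
            have h2 := hval2
            rw [← hτeq] at h2
            have h3 := hcveq (fun j => l2 (Sum.inl j))
            simp only [zero_mul, sub_zero] at h2
            linarith
          have hZge : 0 ≤ ∑ j, l2 (Sum.inl j) * dotp (Av2 j) v + dotp (Av2 i) v := by
            have hmem := hdualmem η hη0
            have hinl : ((fun i' => ∑ j, η j * A j i') ∘ Sum.inl) = w := by
              funext i0
              exact hcoleq i0
            have hge := hweakG _ hmem hinl
            rw [huinr η, hsplit] at hge
            linarith [hlamdot]
          rw [hsplit]
          linarith [hlamdot, hZle, hZge]
        refine ⟨η, hη0, fun _ => ?_, hcoleq, hvaleq⟩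
        show 0 < lam i + (l2 (Sum.inl i) + if i = i then 1 else 0)
        rw [if_pos rfl]
        linarith [hlam0 i, hl20 (Sum.inl i)]
      · -- positive multiplier on the objective row
        set η : Fin r → ℚ := fun j =>
          (l2 (Sum.inl j) + if j = i then 1 else 0) / l2 (Sum.inr ()) with hη
        have hη0 : ∀ j, 0 ≤ η j := by
          intro j
          refine div_nonneg ?_ hτ0
          have h2 := hl20 (Sum.inl j)
          split <;> linarith
        have hsplit : ∀ X : Fin r → ℚ, ∑ j, η j * X j
            = (∑ j, l2 (Sum.inl j) * X j + X i) / l2 (Sum.inr ()) := by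
          intro X
          calc ∑ j, η j * X j
              = ∑ j, ((l2 (Sum.inl j) + if j = i then 1 else 0) * X j) / l2 (Sum.inr ()) :=
                Finset.sum_congr rfl fun j _ => by simp only [hη]; ring
            _ = (∑ j, (l2 (Sum.inl j) + if j = i then 1 else 0) * X j) / l2 (Sum.inr ()) :=
                (Finset.sum_div _ _ _).symm
            _ = _ := by rw [hsum3]
        have hcoleq : ∀ i0, ∑ j, η j * A j (Sum.inl i0) = w i0 := by
          intro i0
          rw [hsplit, div_eq_iff (ne_of_gt hτlt)]
          have h1 := hcols i0
          nlinarith [h1]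
        have hvaleq : ∑ j, η j * dotp (Av2 j) v = -μ := by
          have hmem := hdualmem η hη0
          have hinl : ((fun i' => ∑ j, η j * A j i') ∘ Sum.inl) = w := by
            funext i0
            exact hcoleq i0
          have hge := hweakG _ hmem hinl
          rw [huinr η, hsplit] at hge
          have h2 := (le_div_iff₀ hτlt).mp hge
          have h3 : ∑ j, l2 (Sum.inl j) * dotp (Av2 j) v + dotp (Av2 i) v
              ≤ -μ * l2 (Sum.inr ()) := by
            have h4 := hval2
            have h5 := hcveq (fun j => l2 (Sum.inl j))
            nlinarith [h4, h5]
          rw [hsplit, div_eq_iff (ne_of_gt hτlt)]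
          linarith
        refine ⟨η, hη0, fun _ => ?_, hcoleq, hvaleq⟩
        show 0 < (l2 (Sum.inl i) + if i = i then 1 else 0) / l2 (Sum.inr ())
        rw [if_pos rfl]
        apply div_pos _ hτlt
        linarith [hl20 (Sum.inl i)]
  choose ηf hηf using hcomp
  have hηf0 : ∀ i j, 0 ≤ ηf i j := fun i => (hηf i).1
  have hηfpos : ∀ i, i ∈ Ist → 0 < ηf i i := fun i => (hηf i).2.1
  have hηfcol : ∀ i i0, ∑ j, ηf i j * A j (Sum.inl i0) = w i0 := fun i => (hηf i).2.2.1
  have hηfval : ∀ i, ∑ j, ηf i j * dotp (Av2 j) v = -μ := fun i => (hηf i).2.2.2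
  set K : ℚ := (Ist.card : ℚ) + 1 with hK
  have hKpos : 0 < K := by
    rw [hK]
    have h1 : (0:ℚ) ≤ (Ist.card : ℚ) := Nat.cast_nonneg _
    linarith
  set ηb : Fin r → ℚ := fun j => (∑ i' ∈ Ist, ηf i' j + lam j) / K with hηb
  have hηb0 : ∀ j, 0 ≤ ηb j := by
    intro j
    refine div_nonneg ?_ (le_of_lt hKpos)
    have h1 : 0 ≤ ∑ i' ∈ Ist, ηf i' j := Finset.sum_nonneg fun i' _ => hηf0 i' j
    linarith [hlam0 j]
  have hηbpos : ∀ i ∈ Ist, 0 < ηb i := by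
    intro i hi
    refine div_pos ?_ hKpos
    have h1 : 0 < ηf i i := hηfpos i hi
    have h2 : ηf i i ≤ ∑ i' ∈ Ist, ηf i' i :=
      Finset.single_le_sum (fun i' _ => hηf0 i' i) hi
    linarith [hlam0 i]
  have hηbsplit : ∀ X : Fin r → ℚ, ∑ j, ηb j * X j
      = (∑ i' ∈ Ist, (∑ j, ηf i' j * X j) + ∑ j, lam j * X j) / K := by
    intro X
    calc ∑ j, ηb j * X j
        = ∑ j, (∑ i' ∈ Ist, ηf i' j * X j + lam j * X j) / K := by
          refine Finset.sum_congr rfl fun j _ => ?_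
          rw [hηb]
          rw [div_mul_eq_mul_div, add_mul, Finset.sum_mul]
      _ = (∑ j, (∑ i' ∈ Ist, ηf i' j * X j + lam j * X j)) / K :=
          (Finset.sum_div _ _ _).symm
      _ = (∑ i' ∈ Ist, (∑ j, ηf i' j * X j) + ∑ j, lam j * X j) / K := by
          rw [Finset.sum_add_distrib, Finset.sum_comm]
  have hKne : K ≠ 0 := ne_of_gt hKpos
  have hηbcol : ∀ i0, ∑ j, ηb j * A j (Sum.inl i0) = w i0 := by
    intro i0
    rw [hηbsplit]
    have h1 : ∑ i' ∈ Ist, (∑ j, ηf i' j * A j (Sum.inl i0)) = (Ist.card : ℚ) * w i0 := by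
      rw [Finset.sum_congr rfl fun i' _ => hηfcol i' i0, Finset.sum_const, nsmul_eq_mul]
    rw [h1, hlamB' i0, div_eq_iff hKne, hK]
    ring
  have hηbval : ∑ j, ηb j * dotp (Av2 j) v = -μ := by
    rw [hηbsplit]
    have h1 : ∑ i' ∈ Ist, (∑ j, ηf i' j * dotp (Av2 j) v) = (Ist.card : ℚ) * (-μ) := by
      rw [Finset.sum_congr rfl fun i' _ => hηfval i', Finset.sum_const, nsmul_eq_mul]
    rw [h1, hlamdot, div_eq_iff hKne, hK]
    ring
  set ustar : (Fin m ⊕ Fin d) → ℚ := fun i' => ∑ j, ηb j * A j i' with hustar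
  have hustarDual : ustar ∈ dualCone C := hdualmem ηb hηb0
  have hustarinl : ustar ∘ Sum.inl = w := funext fun i0 => hηbcol i0
  have hustarinrv : dotp (ustar ∘ Sum.inr) v = -μ := by
    have h1 := huinr ηb
    rw [hηbval] at h1
    exact h1
  set SGd : Set ((Fin m ⊕ Fin d) → ℚ) :=
    {u : (Fin m ⊕ Fin d) → ℚ |
      u ∘ Sum.inr ∈ faceOf {y : Fin d → ℚ | Sum.elim w y ∈ dualCone C} v ∧
        u ∘ Sum.inl = w} with hSGd
  have hSGelim : ∀ u : (Fin m ⊕ Fin d) → ℚ, u ∘ Sum.inl = w →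
      Sum.elim w (u ∘ Sum.inr) = u := by
    intro u h1; rw [← h1]; exact helim u
  have hustarSG : ustar ∈ SGd := by
    rw [hSGd]
    refine ⟨⟨?_, ?_⟩, hustarinl⟩
    · show Sum.elim w (ustar ∘ Sum.inr) ∈ dualCone C
      rw [hSGelim ustar hustarinl]
      exact hustarDual
    · intro y hy
      have h1 : Sum.elim w y ∈ dualCone C := hy
      have h2 := hweakG (Sum.elim w y) h1 rfl
      have h3 : ((Sum.elim w y) ∘ Sum.inr) = y := rfl
      rw [h3] at h2
      calc dotp v (ustar ∘ Sum.inr) = dotp (ustar ∘ Sum.inr) v := dotp_comm' _ _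
        _ = -μ := hustarinrv
        _ ≤ dotp y v := h2
        _ = dotp v y := dotp_comm' _ _
  have hNC := normalCone_char C SFd F h0C hdbC hFt
  rw [hNC]
  have h0dual : (0 : (Fin m ⊕ Fin d) → ℚ) ∈ dualCone C := by
    intro x hx; rw [dotp_zero_left']
  have hSFsubC : ∀ s ∈ SFd, s ∈ C := fun s hs => (hSFprops s hs).1
  have hNface : {u | u ∈ dualCone C ∧ ∀ s ∈ SFd, dotp u s = 0}
      = faceOf (dualCone C) sstar := by
    ext u
    simp only [Set.mem_setOf_eq, faceOf]
    constructor
    · rintro ⟨h1, h2⟩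
      refine ⟨h1, fun t ht => ?_⟩
      have h3 : dotp sstar u = 0 := by rw [dotp_comm']; exact h2 sstar hsstarSF
      rw [h3, dotp_comm']
      exact ht sstar hsstarC
    · rintro ⟨h1, h2⟩
      have h3 : dotp sstar u ≤ 0 := by
        have h4 := h2 0 h0dual
        rwa [dotp_zero_right'] at h4
      have h4 : 0 ≤ dotp u sstar := h1 sstar hsstarC
      have h5 : dotp u sstar = 0 := by rw [dotp_comm'] at h3; linarith
      refine ⟨h1, fun s hs => ?_⟩
      obtain ⟨ε, hε, hmem⟩ := hrelC s hs
      have h6 : 0 ≤ dotp u (sstar + ε • (sstar - s)) := h1 _ (hSFsubC _ hmem)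
      rw [dotp_add_right', dotp_smul_right', dotp_sub_right', h5] at h6
      have h7 : 0 ≤ dotp u s := h1 s (hSFsubC s hs)
      nlinarith
  have hNisFace : IsFaceOf (dualCone C)
      {u | u ∈ dualCone C ∧ ∀ s ∈ SFd, dotp u s = 0} :=
    ⟨⟨0, h0dual, fun s _ => dotp_zero_left' s⟩, sstar, hNface⟩
  have hSGsubN : SGd ⊆ {u | u ∈ dualCone C ∧ ∀ s ∈ SFd, dotp u s = 0} := by
    intro u hu
    rw [hSGd] at hu
    obtain ⟨⟨humem, humin⟩, huinl⟩ := hu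
    have huD : u ∈ dualCone C := by
      have h1 : Sum.elim w (u ∘ Sum.inr) ∈ dualCone C := humem
      rwa [hSGelim u huinl] at h1
    refine ⟨huD, fun s hs => ?_⟩
    obtain ⟨hsC, hs2, hsμ⟩ := hSFprops s hs
    have h1 : dotp u s = dotp w (s ∘ Sum.inl) + dotp (u ∘ Sum.inr) v := by
      conv_lhs => rw [← helim s]
      rw [hdotelim, huinl, hs2]
    have hmem2 : Sum.elim w (ustar ∘ Sum.inr) ∈ dualCone C := by
      rw [hSGelim ustar hustarinl]
      exact hustarDual
    have h3 := humin _ hmem2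
    have h2 : dotp (u ∘ Sum.inr) v ≤ -μ := by
      calc dotp (u ∘ Sum.inr) v = dotp v (u ∘ Sum.inr) := dotp_comm' _ _
        _ ≤ dotp v (ustar ∘ Sum.inr) := h3
        _ = dotp (ustar ∘ Sum.inr) v := dotp_comm' _ _
        _ = -μ := hustarinrv
    have h4 : -μ ≤ dotp (u ∘ Sum.inr) v := hweakG u huD huinl
    rw [h1, hsμ]
    linarith
  have hGN : G ⊆ {u | u ∈ dualCone C ∧ ∀ s ∈ SFd, dotp u s = 0} :=
    hGt.2.2 _ hNisFace hSGsubN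
  obtain ⟨⟨g₀, hg₀⟩, p₀, hGp⟩ := hGt.1
  have hg₀' : g₀ ∈ faceOf (dualCone C) p₀ := by rw [← hGp]; exact hg₀
  have hdbDual : ∀ u ∈ dualCone C, u + u ∈ dualCone C := by
    intro u hu x hx
    rw [dotp_add_left']
    have h1 := hu x hx
    linarith
  have hp₀g₀ : dotp p₀ g₀ = 0 := by
    have h1 : dotp p₀ g₀ ≤ 0 := by
      have h2 := hg₀'.2 0 h0dual
      rwa [dotp_zero_right'] at h2
    have h2 : dotp p₀ g₀ ≤ dotp p₀ (g₀ + g₀) := hg₀'.2 _ (hdbDual g₀ hg₀'.1)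
    rw [dotp_add_right'] at h2
    linarith
  have hp₀pos : ∀ u' ∈ dualCone C, 0 ≤ dotp p₀ u' := by
    intro u' hu'
    have h1 := hg₀'.2 u' hu'
    linarith [hp₀g₀]
  have hp₀C : p₀ ∈ C := by
    refine (memC _).mpr fun i => ?_
    have h1 : A i ∈ dualCone C := fun x hx => (memC x).mp hx i
    have h2 := hp₀pos (A i) h1
    rwa [dotp_comm'] at h2
  have hp₀G : ∀ u' ∈ G, dotp p₀ u' = 0 := by
    intro u' hu'
    rw [hGp] at hu'
    obtain ⟨h1, h2⟩ := hu'
    have h3 := h2 0 h0dual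
    rw [dotp_zero_right'] at h3
    have h4 := hp₀pos u' h1
    linarith
  have hAIstp₀ : ∀ i ∈ Ist, dotp (A i) p₀ = 0 := by
    have h1 : dotp p₀ ustar = 0 := hp₀G ustar (hGt.2.1 hustarSG)
    have h2 : ∑ j, ηb j * dotp (A j) p₀ = 0 := by
      rw [sum_mul_dotp]
      rw [dotp_comm'] at h1
      exact h1
    have h3 := (Finset.sum_eq_zero_iff_of_nonneg
      (fun j _ => mul_nonneg (hηb0 j) ((memC p₀).mp hp₀C j))).mp h2
    intro i hi
    have h4 := h3 i (Finset.mem_univ i)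
    have h5 := hηbpos i hi
    have h6 := (memC p₀).mp hp₀C i
    by_contra h7
    have h8 : 0 < dotp (A i) p₀ := lt_of_le_of_ne h6 (Ne.symm h7)
    nlinarith
  refine Set.Subset.antisymm ?_ hGN
  intro u hu
  obtain ⟨huD, huSF⟩ := hu
  have hbd3 : ∀ x, (∀ j : Fin r, (0:ℚ) ≤ dotp (A j) x) → (0:ℚ) ≤ dotp u x := by
    intro x hx
    exact huD x ((memC x).mpr fun j => hx j)
  obtain ⟨γ, hγ0, hγA, -⟩ := farkas_implied A (fun _ => (0:ℚ)) u 0 0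
    (fun j => by rw [dotp_zero_right']) hbd3
  have hγu : (fun i' => ∑ j, γ j * A j i') = u := funext fun i' => hγA i'
  have hγs : ∀ j, γ j * dotp (A j) sstar = 0 := by
    have h1 : ∑ j, γ j * dotp (A j) sstar = 0 := by
      rw [sum_mul_dotp, hγu]
      exact huSF sstar hsstarSF
    have h2 := (Finset.sum_eq_zero_iff_of_nonneg
      (fun j _ => mul_nonneg (hγ0 j) ((memC sstar).mp hsstarC j))).mp h1
    exact fun j => h2 j (Finset.mem_univ j)
  have hup₀ : dotp p₀ u = 0 := by
    rw [dotp_comm', ← hγu, ← sum_mul_dotp]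
    apply Finset.sum_eq_zero
    intro j _
    by_cases hj : dotp (A j) sstar = 0
    · have hjI : j ∈ Ist := by
        rw [hIst]
        exact Finset.mem_filter.mpr ⟨Finset.mem_univ _, hj⟩
      rw [hAIstp₀ j hjI, mul_zero]
    · have h3 := hγs j
      have h4 : γ j = 0 := (mul_eq_zero.mp h3).resolve_right hj
      rw [h4, zero_mul]
  rw [hGp]
  refine ⟨huD, fun t ht => ?_⟩
  rw [hup₀]
  exact hp₀pos t ht
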